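/- arXiv:2502.01381 — 3 statements merged into one kernel-verified Lean document; each statement's English description precedes it below -/
import Mathlib

section
/- Let σ ≥ 0 and suppose there exists a nonempty set S ⊆ V with ∑_{i=1}^r m(S, G_i) ≥ σ|S|, and let γ* = min{ Δ(S, 𝒢) : S ⊆ V nonempty, ∑_{i=1}^r m(S, G_i) ≥ σ|S| }. If γ > γ* and S₀ minimizes S ↦ b(S, 𝒢) − γ|S| over all S ⊆ V with ∑_{i=1}^r m(S, G_i) ≥ σ|S|, then S₀ ≠ ∅ and Δ(S₀, 𝒢) < γ. -/
/-- Number of edges of `G` with both endpoints in `S`. -/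
noncomputable def edgeCnt {V : Type*} (G : SimpleGraph V) (S : Finset V) : ℕ :=
  {e ∈ G.edgeSet | ∀ v ∈ e, v ∈ S}.ncard

/-- Density of the subgraph induced by `S` in `G`. -/
noncomputable def dens {V : Type*} (G : SimpleGraph V) (S : Finset V) : ℝ :=
  (edgeCnt G S : ℝ) / (S.card : ℝ)

/-- Total density across the graph snapshots. -/
noncomputable def densTot {V : Type*} {r : ℕ} (G : Fin r → SimpleGraph V) (S : Finset V) : ℝ :=
  ∑ i, dens (G i) S

/-- Difference between the maximum and minimum induced density. -/
noncomputable def densDiff {V : Type*} {r : ℕ} (G : Fin r → SimpleGraph V) (S : Finset V) : ℝ :=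
  (⨆ i, dens (G i) S) - (⨅ i, dens (G i) S)

/-- Difference between the maximum and minimum induced edge count. -/
noncomputable def edgeDiff {V : Type*} {r : ℕ} (G : Fin r → SimpleGraph V) (S : Finset V) : ℝ :=
  (⨆ i, (edgeCnt (G i) S : ℝ)) - (⨅ i, (edgeCnt (G i) S : ℝ))

/-!
Let `S*` be a feasible set attaining `γ*`. Since `b(S*) = γ*|S*|`, minimality of `S₀` gives
`b(S₀) - γ|S₀| ≤ (γ* - γ)|S*| < 0`. The empty set has value `0`, so `S₀ ≠ ∅`, and dividing by
`|S₀|` gives `Δ(S₀) = b(S₀)/|S₀| < γ`.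
-/

section

variable {V : Type*} {r : ℕ}

lemma edgeCnt_empty (G : SimpleGraph V) : edgeCnt G ∅ = 0 := by
  have hno : {e ∈ G.edgeSet | ∀ v ∈ e, v ∈ (∅ : Finset V)} = ∅ :=
    Set.eq_empty_of_forall_notMem fun e he =>
      Finset.notMem_empty _ (he.2 e.out.1 (Sym2.out_fst_mem e))
  rw [edgeCnt, hno, Set.ncard_empty]

lemma edgeDiff_empty (G : Fin r → SimpleGraph V) : edgeDiff G ∅ = 0 := by
  simp [edgeDiff, edgeCnt_empty, Real.iSup_const_zero, Real.iInf_const_zero]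

/-- Also true for `S = ∅`, where both sides are `0` since `x / 0 = 0`. -/
lemma densDiff_eq_edgeDiff_div (G : Fin r → SimpleGraph V) (S : Finset V) :
    densDiff G S = edgeDiff G S / S.card := by
  have hinv : (0 : ℝ) ≤ (S.card : ℝ)⁻¹ := by positivity
  simp only [densDiff, edgeDiff, dens, div_eq_mul_inv, sub_mul,
    Real.iSup_mul_of_nonneg hinv, Real.iInf_mul_of_nonneg hinv]

lemma nonempty_and_densDiff_lt_of_edgeDiff_sub_neg (G : Fin r → SimpleGraph V) {S : Finset V}
    {γ : ℝ} (h : edgeDiff G S - γ * S.card < 0) : S.Nonempty ∧ densDiff G S < γ := by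
  have hS : S.Nonempty := by
    rw [Finset.nonempty_iff_ne_empty]
    rintro rfl
    simp [edgeDiff_empty] at h
  have hcard : (0 : ℝ) < S.card := by exact_mod_cast hS.card_pos
  refine ⟨hS, ?_⟩
  rw [densDiff_eq_edgeDiff_div, div_lt_iff₀ hcard]
  linarith

end

theorem stmt3_general {V : Type*} {r : ℕ}
    (G : Fin r → SimpleGraph V) (σ γ γstar : ℝ)
    (hstar : IsLeast
      {x : ℝ | ∃ S : Finset V, S.Nonempty ∧
        σ * (S.card : ℝ) ≤ (∑ i, (edgeCnt (G i) S : ℝ)) ∧ densDiff G S = x}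
      γstar)
    (hγ : γstar < γ)
    (S₀ : Finset V)
    (hmin : ∀ S : Finset V, σ * (S.card : ℝ) ≤ (∑ i, (edgeCnt (G i) S : ℝ)) →
      edgeDiff G S₀ - γ * (S₀.card : ℝ) ≤ edgeDiff G S - γ * (S.card : ℝ)) :
    S₀.Nonempty ∧ densDiff G S₀ < γ := by
  obtain ⟨Sst, hSne, hSfeas, rfl⟩ := hstar.1
  have hcard : (0 : ℝ) < Sst.card := by exact_mod_cast hSne.card_pos
  have hedge : edgeDiff G Sst = densDiff G Sst * Sst.card := by
    rw [densDiff_eq_edgeDiff_div, div_mul_cancel₀ _ hcard.ne']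
  apply nonempty_and_densDiff_lt_of_edgeDiff_sub_neg G
  calc edgeDiff G S₀ - γ * S₀.card
      ≤ edgeDiff G Sst - γ * Sst.card := hmin Sst hSfeas
    _ = (densDiff G Sst - γ) * Sst.card := by rw [hedge]; ring
    _ < 0 := mul_neg_of_neg_of_pos (by linarith) hcard

theorem stmt3 {V : Type*} [Fintype V] {r : ℕ} (hr : 1 ≤ r)
    (G : Fin r → SimpleGraph V) (σ γ γstar : ℝ) (hσ : 0 ≤ σ)
    (hex : ∃ S : Finset V, S.Nonempty ∧ σ * (S.card : ℝ) ≤ ∑ i, (edgeCnt (G i) S : ℝ))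
    (hstar : IsLeast
      {x : ℝ | ∃ S : Finset V, S.Nonempty ∧
        σ * (S.card : ℝ) ≤ (∑ i, (edgeCnt (G i) S : ℝ)) ∧ densDiff G S = x}
      γstar)
    (hγ : γstar < γ)
    (S₀ : Finset V) (hfeas : σ * (S₀.card : ℝ) ≤ ∑ i, (edgeCnt (G i) S₀ : ℝ))
    (hmin : ∀ S : Finset V, σ * (S.card : ℝ) ≤ (∑ i, (edgeCnt (G i) S : ℝ)) →
      edgeDiff G S₀ - γ * (S₀.card : ℝ) ≤ edgeDiff G S - γ * (S.card : ℝ)) :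
    S₀.Nonempty ∧ densDiff G S₀ < γ :=
  stmt3_general G σ γ γstar hstar hγ S₀ hmin
end

section
/- Let α ≥ 0 and suppose there exists a nonempty set S ⊆ V with b(S, 𝒢) ≤ α|S|; let γ* = max{ d(S, 𝒢) : S ⊆ V nonempty, b(S, 𝒢) ≤ α|S| }. If 0 < ε ≤ 1/(r n³), 0 ≤ L < γ* ≤ (1 + ε)L, and S₀ maximizes S ↦ ∑_{i=1}^r m(S, G_i) − L|S| over all S ⊆ V with b(S, 𝒢) ≤ α|S|, then d(S₀, 𝒢) = γ*. -/
theorem eq_of_abs_div_sub_div_lt {a b : ℤ} {s t : ℕ} (hs : 0 < s) (ht : 0 < t)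
    (h : |(a : ℝ) / s - b / t| < 1 / (s * t)) : (a : ℝ) / s = b / t := by
  have hst : (0 : ℝ) < s * t := by positivity
  have hdiff : (a : ℝ) / s - b / t = ((a * t - b * s : ℤ) : ℝ) / (s * t) := by
    push_cast
    field_simp
  rw [hdiff, abs_div, abs_of_pos hst, div_lt_div_iff_of_pos_right hst] at h
  have hzero : a * t - b * s = 0 := by
    by_contra hne
    exact h.not_ge (by exact_mod_cast Int.one_le_abs hne)
  rw [← sub_eq_zero, hdiff, hzero, Int.cast_zero, zero_div]

section Density

variable {V : Type*} {r : ℕ} (G : Fin r → SimpleGraph V)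

theorem edgeCnt_le_card_sym2 (H : SimpleGraph V) (S : Finset V) : edgeCnt H S ≤ S.sym2.card := by
  rw [edgeCnt, ← Set.ncard_coe_finset]
  exact Set.ncard_le_ncard (fun e he => Finset.mem_sym2_iff.2 he.2) S.sym2.finite_toSet

theorem edgeCnt_le_card_mul_card (H : SimpleGraph V) (S : Finset V) :
    edgeCnt H S ≤ S.card * S.card := by
  refine (edgeCnt_le_card_sym2 H S).trans ?_
  rw [Finset.card_sym2, Nat.choose_two_right, Nat.add_sub_cancel]
  apply Nat.div_le_of_le_mul
  nlinarith [Nat.le_mul_self S.card]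

theorem dens_le_card (H : SimpleGraph V) (S : Finset V) : dens H S ≤ S.card := by
  apply div_le_of_le_mul₀ (Nat.cast_nonneg _) (Nat.cast_nonneg _)
  exact_mod_cast edgeCnt_le_card_mul_card H S

theorem densTot_le_mul_card [Fintype V] (S : Finset V) :
    densTot G S ≤ r * Fintype.card V := by
  calc densTot G S ≤ ∑ _i : Fin r, (Fintype.card V : ℝ) :=
        Finset.sum_le_sum fun i _ =>
          (dens_le_card (G i) S).trans (by exact_mod_cast S.card_le_univ)
    _ = r * Fintype.card V := by simp

theorem densTot_eq_sum_div (S : Finset V) :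
    densTot G S = ((∑ i, edgeCnt (G i) S : ℕ) : ℝ) / S.card := by
  simp only [densTot, dens, Nat.cast_sum, Finset.sum_div]

theorem sum_edgeCnt_sub_mul_card (L : ℝ) (S : Finset V) :
    ∑ i, (edgeCnt (G i) S : ℝ) - L * S.card = (densTot G S - L) * S.card := by
  rcases S.eq_empty_or_nonempty with rfl | hS
  · have hzero (H : SimpleGraph V) : edgeCnt H ∅ = 0 := by
      simpa using edgeCnt_le_card_mul_card H ∅
    simp [hzero]
  · have hcard : (S.card : ℝ) ≠ 0 := by exact_mod_cast hS.card_pos.ne'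
    rw [densTot_eq_sum_div, Nat.cast_sum]
    field_simp

-- Total densities are fractions with denominators at most `n`.
theorem densTot_eq_of_abs_sub_lt [Fintype V] {S T : Finset V} (hS : S.Nonempty)
    (hT : T.Nonempty) (h : |densTot G S - densTot G T| < 1 / (Fintype.card V : ℝ) ^ 2) :
    densTot G S = densTot G T := by
  have hcards : (S.card : ℝ) * T.card ≤ (Fintype.card V : ℝ) ^ 2 := by
    rw [sq]
    gcongr <;> exact_mod_cast Finset.card_le_univ _
  have key := eq_of_abs_div_sub_div_lt (a := (∑ i, edgeCnt (G i) S : ℕ))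
    (b := (∑ i, edgeCnt (G i) T : ℕ)) hS.card_pos hT.card_pos
  simp only [Int.cast_natCast] at key
  rw [densTot_eq_sum_div, densTot_eq_sum_div] at h ⊢
  exact key (h.trans_le (by gcongr))

end Density

theorem stmt7_general {V : Type*} [Fintype V] {r : ℕ}
    (G : Fin r → SimpleGraph V) (α ε L γstar : ℝ)
    (hε0 : 0 < ε) (hε : ε ≤ 1 / ((r : ℝ) * (Fintype.card V : ℝ) ^ 3))
    (hstar : IsGreatest
      {x : ℝ | ∃ S : Finset V, S.Nonempty ∧ edgeDiff G S ≤ α * (S.card : ℝ) ∧ densTot G S = x}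
      γstar)
    (hL : L < γstar) (hU : γstar ≤ (1 + ε) * L)
    (S₀ : Finset V) (hfeas : edgeDiff G S₀ ≤ α * (S₀.card : ℝ))
    (hmax : ∀ S : Finset V, edgeDiff G S ≤ α * (S.card : ℝ) →
      (∑ i, (edgeCnt (G i) S : ℝ)) - L * (S.card : ℝ) ≤
        (∑ i, (edgeCnt (G i) S₀ : ℝ)) - L * (S₀.card : ℝ)) :
    densTot G S₀ = γstar := by
  obtain ⟨T, hT, hTfeas, rfl⟩ := hstar.1
  have hobj : 0 < (densTot G S₀ - L) * S₀.card := by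
    have hT' : (0 : ℝ) < T.card := by exact_mod_cast hT.card_pos
    have hcompare := hmax T hTfeas
    rw [sum_edgeCnt_sub_mul_card, sum_edgeCnt_sub_mul_card] at hcompare
    nlinarith
  obtain ⟨hS₀L, hS₀card⟩ := (pos_and_pos_or_neg_and_neg_of_mul_pos hobj).resolve_right
    fun h => h.2.not_ge (Nat.cast_nonneg _)
  have hS₀ : S₀.Nonempty := Finset.card_pos.1 (by exact_mod_cast hS₀card)
  have hS₀T : densTot G S₀ ≤ densTot G T := hstar.2 ⟨S₀, hS₀, hfeas, rfl⟩
  have hrn : 0 < (r : ℝ) * (Fintype.card V : ℝ) ^ 3 := one_div_pos.1 (hε0.trans_le hε)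
  have hL0 : 0 < L := by nlinarith
  have hr : (r : ℝ) ≠ 0 := by rintro h; simp [h] at hrn
  have hn : (Fintype.card V : ℝ) ≠ 0 := by rintro h; simp [h] at hrn
  have hgap : densTot G T - densTot G S₀ < 1 / (Fintype.card V : ℝ) ^ 2 :=
    calc densTot G T - densTot G S₀ < ε * densTot G T := by nlinarith
      _ ≤ 1 / ((r : ℝ) * (Fintype.card V : ℝ) ^ 3) * (r * Fintype.card V) := by
        gcongr
        · linarith
        · exact densTot_le_mul_card G T
      _ = 1 / (Fintype.card V : ℝ) ^ 2 := by
        field_simp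
  exact densTot_eq_of_abs_sub_lt G hS₀ hT (by rwa [abs_sub_comm, abs_of_nonneg (by linarith)])

theorem stmt7 {V : Type*} [Fintype V] {r : ℕ} (hr : 1 ≤ r)
    (G : Fin r → SimpleGraph V) (α ε L γstar : ℝ) (hα : 0 ≤ α)
    (hε0 : 0 < ε) (hε : ε ≤ 1 / ((r : ℝ) * (Fintype.card V : ℝ) ^ 3))
    (hex : ∃ S : Finset V, S.Nonempty ∧ edgeDiff G S ≤ α * (S.card : ℝ))
    (hstar : IsGreatest
      {x : ℝ | ∃ S : Finset V, S.Nonempty ∧ edgeDiff G S ≤ α * (S.card : ℝ) ∧ densTot G S = x}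
      γstar)
    (hL0 : 0 ≤ L) (hL : L < γstar) (hU : γstar ≤ (1 + ε) * L)
    (S₀ : Finset V) (hfeas : edgeDiff G S₀ ≤ α * (S₀.card : ℝ))
    (hmax : ∀ S : Finset V, edgeDiff G S ≤ α * (S.card : ℝ) →
      (∑ i, (edgeCnt (G i) S : ℝ)) - L * (S.card : ℝ) ≤
        (∑ i, (edgeCnt (G i) S₀ : ℝ)) - L * (S₀.card : ℝ)) :
    densTot G S₀ = γstar :=
  stmt7_general G α ε L γstar hε0 hε hstar hL hU S₀ hfeas hmax
end

section
/- Let σ ≥ 0 and suppose there exists a nonempty set S ⊆ V with ∑_{i=1}^r m(S, G_i) ≥ σ|S|; let γ* = min{ Δ(S, 𝒢) : S ⊆ V nonempty, ∑_{i=1}^r m(S, G_i) ≥ σ|S| }. If 0 < ε ≤ 1/n³, 0 ≤ L ≤ γ* < U, U − L ≤ εL, and S₀ minimizes S ↦ b(S, 𝒢) − U|S| over all S ⊆ V with ∑_{i=1}^r m(S, G_i) ≥ σ|S|, then Δ(S₀, 𝒢) = γ*. -/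
/-!
Densities are edge differences divided by `|S|`, and edge differences are integers. Let `S*`
attain `γ* = a/p` and let the minimiser `S₀` have edge difference `b` and size `q`. If
`b/q > γ*`, integrality gives `bp - aq ≥ 1`, while comparing the penalised objective with `S*`
gives `b ≤ a + U(q - p)`. Together, `1 ≤ p(q - p)(U - γ*) ≤ ε(q - p)a < εn³ ≤ 1`, because
`U - γ* ≤ εγ*` and `a ≤ n²`.
-/

section

variable {V : Type*} {r : ℕ}

lemma edgeCnt_le_card_sq [Fintype V] (G : SimpleGraph V) (S : Finset V) :
    edgeCnt G S ≤ Fintype.card V ^ 2 := by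
  classical
  calc edgeCnt G S ≤ G.edgeSet.ncard := Set.ncard_le_ncard (Set.sep_subset _ _) (Set.toFinite _)
    _ = G.edgeFinset.card := by rw [← SimpleGraph.coe_edgeFinset, Set.ncard_coe_finset]
    _ ≤ (Fintype.card V).choose 2 := G.card_edgeFinset_le_card_choose_two
    _ ≤ Fintype.card V ^ 2 := Nat.choose_le_pow _ _

lemma edgeDiff_le_card_sq [Fintype V] (G : Fin r → SimpleGraph V) (S : Finset V) :
    edgeDiff G S ≤ Fintype.card V ^ 2 := by
  have hsup : ⨆ i, (edgeCnt (G i) S : ℝ) ≤ Fintype.card V ^ 2 :=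
    Real.iSup_le (fun i => by exact_mod_cast edgeCnt_le_card_sq (G i) S) (by positivity)
  have hinf : 0 ≤ ⨅ i, (edgeCnt (G i) S : ℝ) := Real.iInf_nonneg fun i => Nat.cast_nonneg _
  rw [edgeDiff]
  linarith

lemma exists_edgeDiff_eq_natCast (G : Fin r → SimpleGraph V) (S : Finset V) :
    ∃ a : ℕ, edgeDiff G S = a := by
  cases isEmpty_or_nonempty (Fin r) with
  | inl _ => exact ⟨0, by simp [edgeDiff]⟩
  | inr _ =>
    obtain ⟨j, hj⟩ := exists_eq_ciSup_of_finite (f := fun i => (edgeCnt (G i) S : ℝ))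
    obtain ⟨k, hk⟩ := exists_eq_ciInf_of_finite (f := fun i => (edgeCnt (G i) S : ℝ))
    have hkj : edgeCnt (G k) S ≤ edgeCnt (G j) S := by
      exact_mod_cast hk.trans_le <| (ciInf_le (Set.finite_range _).bddBelow j)
    exact ⟨edgeCnt (G j) S - edgeCnt (G k) S, by rw [edgeDiff, ← hj, ← hk, Nat.cast_sub hkj]⟩

end

lemma natCast_eq_mul_of_sub_mul_le {a b p q : ℕ} {n γ U ε : ℝ} (hp : 0 < p) (hqn : (q : ℝ) ≤ n)
    (ha : (a : ℝ) = γ * p) (han : (a : ℝ) ≤ n ^ 2) (hγb : γ * q ≤ b)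
    (hb : (b : ℝ) - U * q ≤ a - U * p) (hγU : γ < U) (hUγ : U - γ ≤ ε * γ) (hε : 0 < ε)
    (hεn : ε * n ^ 3 ≤ 1) : (b : ℝ) = γ * q := by
  by_contra hne
  have hp1 : (1 : ℝ) ≤ p := by exact_mod_cast hp
  have hγ : 0 ≤ γ := by nlinarith [(a.cast_nonneg : (0 : ℝ) ≤ a)]
  have hgap : (a : ℝ) * q + 1 ≤ b * p := by
    have hlt : (a : ℝ) * q < b * p := by
      rw [ha]; nlinarith [lt_of_le_of_ne hγb (Ne.symm hne)]
    exact_mod_cast (show a * q < b * p by exact_mod_cast hlt)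
  have h_one_le : 1 ≤ p * (q - p) * (U - γ) := by
    linear_combination hgap + (p : ℝ) * hb + ((p : ℝ) - q) * ha
  have hqp : (0 : ℝ) ≤ q - p := by nlinarith
  have hn : (1 : ℝ) ≤ n := by linarith
  refine lt_irrefl (1 : ℝ) ?_
  calc (1 : ℝ) ≤ p * (q - p) * (U - γ) := h_one_le
    _ ≤ p * (q - p) * (ε * γ) := by gcongr
    _ = ε * (q - p) * a := by rw [ha]; ring
    _ ≤ ε * (n - 1) * n ^ 2 := by gcongr
    _ < ε * n ^ 3 := by nlinarith [mul_pos hε (pow_pos (one_pos.trans_le hn) 2)]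
    _ ≤ 1 := hεn

theorem stmt9_general {V : Type*} [Fintype V] {r : ℕ}
    (G : Fin r → SimpleGraph V) (σ ε L U γstar : ℝ)
    (hε0 : 0 < ε) (hε : ε ≤ 1 / (Fintype.card V : ℝ) ^ 3)
    (hstar : IsLeast
      {x : ℝ | ∃ S : Finset V, S.Nonempty ∧
        σ * (S.card : ℝ) ≤ (∑ i, (edgeCnt (G i) S : ℝ)) ∧ densDiff G S = x}
      γstar)
    (hLγ : L ≤ γstar) (hγU : γstar < U) (hUL : U - L ≤ ε * L)
    (S₀ : Finset V) (hfeas : σ * (S₀.card : ℝ) ≤ ∑ i, (edgeCnt (G i) S₀ : ℝ))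
    (hmin : ∀ S : Finset V, σ * (S.card : ℝ) ≤ (∑ i, (edgeCnt (G i) S : ℝ)) →
      edgeDiff G S₀ - U * (S₀.card : ℝ) ≤ edgeDiff G S - U * (S.card : ℝ)) :
    densDiff G S₀ = γstar := by
  obtain ⟨⟨S, hS, hSfeas, hSγ⟩, hγ_le⟩ := hstar
  obtain ⟨a, ha⟩ := exists_edgeDiff_eq_natCast G S
  obtain ⟨b, hb⟩ := exists_edgeDiff_eq_natCast G S₀
  have hp : (0 : ℝ) < S.card := by exact_mod_cast hS.card_pos
  have haγ : (a : ℝ) = γstar * S.card := by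
    rw [← hSγ, densDiff_eq_edgeDiff_div, ha, div_mul_cancel₀ _ hp.ne']
  have hS₀ : S₀.Nonempty := by
    rw [Finset.nonempty_iff_ne_empty]
    rintro rfl
    have := hmin S hSfeas
    rw [edgeDiff_empty, ha, haγ, Finset.card_empty, Nat.cast_zero, mul_zero] at this
    linarith [mul_lt_mul_of_pos_right hγU hp]
  have hq : (0 : ℝ) < S₀.card := by exact_mod_cast hS₀.card_pos
  have hγb : γstar * S₀.card ≤ b := by
    rw [← le_div_iff₀ hq, ← hb, ← densDiff_eq_edgeDiff_div]
    exact hγ_le ⟨S₀, hS₀, hfeas, rfl⟩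
  have hn : (0 : ℝ) < Fintype.card V := by exact_mod_cast hS.card_pos.trans_le S.card_le_univ
  have hbγ : (b : ℝ) = γstar * S₀.card :=
    natCast_eq_mul_of_sub_mul_le (n := Fintype.card V) hS.card_pos
      (by exact_mod_cast S₀.card_le_univ) haγ (ha ▸ edgeDiff_le_card_sq G S) hγb
      (ha ▸ hb ▸ hmin S hSfeas) hγU (by linarith [mul_le_mul_of_nonneg_left hLγ hε0.le]) hε0
      ((le_div_iff₀ (pow_pos hn 3)).mp hε)
  rw [densDiff_eq_edgeDiff_div, hb, hbγ, mul_div_cancel_right₀ _ hq.ne']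

theorem stmt9 {V : Type*} [Fintype V] {r : ℕ} (hr : 1 ≤ r)
    (G : Fin r → SimpleGraph V) (σ ε L U γstar : ℝ) (hσ : 0 ≤ σ)
    (hε0 : 0 < ε) (hε : ε ≤ 1 / (Fintype.card V : ℝ) ^ 3)
    (hex : ∃ S : Finset V, S.Nonempty ∧ σ * (S.card : ℝ) ≤ ∑ i, (edgeCnt (G i) S : ℝ))
    (hstar : IsLeast
      {x : ℝ | ∃ S : Finset V, S.Nonempty ∧
        σ * (S.card : ℝ) ≤ (∑ i, (edgeCnt (G i) S : ℝ)) ∧ densDiff G S = x}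
      γstar)
    (hL0 : 0 ≤ L) (hLγ : L ≤ γstar) (hγU : γstar < U) (hUL : U - L ≤ ε * L)
    (S₀ : Finset V) (hfeas : σ * (S₀.card : ℝ) ≤ ∑ i, (edgeCnt (G i) S₀ : ℝ))
    (hmin : ∀ S : Finset V, σ * (S.card : ℝ) ≤ (∑ i, (edgeCnt (G i) S : ℝ)) →
      edgeDiff G S₀ - U * (S₀.card : ℝ) ≤ edgeDiff G S - U * (S.card : ℝ)) :
    densDiff G S₀ = γstar :=
  stmt9_general G σ ε L U γstar hε0 hε hstar hLγ hγU hUL S₀ hfeas hmin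
end
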